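/- Packing-style average error bound for the square-root measurement: Let L be a finite index set, and for each ℓ ∈ L let ρ_ℓ be a density matrix and P_ℓ a matrix with 0 ≤ P_ℓ ≤ I, all over a fixed finite index type; suppose S = Σ_ℓ P_ℓ is positive definite and set Λ_ℓ = S^{−1/2} P_ℓ S^{−1/2}. If there are λ, ν ≥ 0 such that Tr[P_ℓ ρ_ℓ] ≥ 1 − λ for every ℓ ∈ L and Tr[P_{ℓ'} ρ_ℓ] ≤ ν for all ℓ' ≠ ℓ, then the average probability of error satisfies (1/|L|) Σ_ℓ Tr[(I − Λ_ℓ) ρ_ℓ] ≤ 2λ + 4(|L| − 1)ν. -/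

import Mathlib

/-!
The proof rests on the Hayashi–Nagaoka operator inequality: for `0 ≤ P ≤ 1` and `P ≤ S = T²`
with `T ≥ 0` invertible,
`1 - T⁻¹ P T⁻¹ ≤ 2 (1 - P) + 4 (S - P)`.
Writing `M = T⁻¹`, the difference of the two sides equals
`(2 - M)(S - P)(2 - M) + 2 (M - 1) P (M - 1) + 4 (T - P)`, which is nonnegative because
`P ≤ √P ≤ √S = T` by operator monotonicity of the square root.
Pairing the inequality for `P_ℓ` with `ρ_ℓ` bounds the error on `ρ_ℓ` by
`2 (1 - Tr P_ℓ ρ_ℓ) + 4 ∑_{ℓ' ≠ ℓ} Tr P_ℓ' ρ_ℓ ≤ 2λ + 4 (|L| - 1) ν`, and averaging over `ℓ`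
gives the theorem.
-/

open scoped Matrix ComplexOrder

/-- The square root of a positive semidefinite matrix, as defined in Mathlib (December 2024). -/
noncomputable def Matrix.PosSemidef.sqrt {n 𝕜 : Type*} [Fintype n] [DecidableEq n] [RCLike 𝕜]
    {A : Matrix n n 𝕜} (hA : A.PosSemidef) : Matrix n n 𝕜 :=
  (hA.1.eigenvectorUnitary : Matrix n n 𝕜) *
    Matrix.diagonal (fun i => ((Real.sqrt (hA.1.eigenvalues i) : ℝ) : 𝕜)) *
    (star hA.1.eigenvectorUnitary : Matrix n n 𝕜)

theorem IsSelfAdjoint.of_mul_eq_one {R : Type*} [Monoid R] [StarMul R] {T M : R}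
    (hT : IsSelfAdjoint T) (hTM : T * M = 1) : IsSelfAdjoint M := by
  have hMT : star M * T = 1 := by rw [← hT.star_eq, ← star_mul, hTM, star_one]
  calc star M = star M * T * M := by rw [mul_assoc, hTM, mul_one]
    _ = M := by rw [hMT, one_mul]

theorem hayashi_nagaoka_of_le_root {R : Type*} [Ring R] [PartialOrder R] [StarRing R]
    [StarOrderedRing R] {P T M : R} (hMT : M * T = 1) (hTM : T * M = 1)
    (hP : 0 ≤ P) (hPT : P ≤ T) (hPS : P ≤ T * T) :
    1 - M * P * M ≤ 2 • (1 - P) + 4 • (T * T - P) := by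
  have hT : IsSelfAdjoint T := by
    simpa using (IsSelfAdjoint.of_nonneg hP).add (IsSelfAdjoint.of_nonneg (sub_nonneg.mpr hPT))
  have hM : IsSelfAdjoint M := hT.of_mul_eq_one hTM
  have expand : 2 • (1 - P) + 4 • (T * T - P) - (1 - M * P * M) =
      (2 - M) * (T * T - P) * (2 - M) + 2 • ((M - 1) * P * (M - 1)) + 4 • (T - P) +
        ((1 - M * T * (T * M)) + 2 • (T * (T * M) - T) + 2 • (M * T * T - T)) := by
    noncomm_ring
  rw [hMT, hTM] at expand
  simp only [one_mul, mul_one, sub_self, smul_zero, add_zero] at expand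
  rw [← sub_nonneg, expand]
  have h2M : IsSelfAdjoint (2 - M) := (IsSelfAdjoint.ofNat 2).sub hM
  have hM1 : IsSelfAdjoint (M - 1) := hM.sub (.one R)
  exact add_nonneg (add_nonneg (h2M.conjugate_nonneg (sub_nonneg.mpr hPS))
    (nsmul_nonneg (hM1.conjugate_nonneg hP) 2)) (nsmul_nonneg (sub_nonneg.mpr hPT) 4)

section CStarAlgebra

variable {A : Type*} [CStarAlgebra A] [PartialOrder A] [StarOrderedRing A]

theorem CFC.le_sqrt_self {a : A} (ha₀ : 0 ≤ a) (ha₁ : a ≤ 1) : a ≤ CFC.sqrt a := by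
  rw [CFC.sqrt_eq_real_sqrt a, cfcₙ_eq_cfc]
  conv_lhs => rw [← cfc_id' ℝ a]
  refine cfc_mono fun x hx => Real.le_sqrt_of_sq_le ?_
  have hx₀ : 0 ≤ x := spectrum_nonneg_of_nonneg ha₀ hx
  have hx₁ : x ≤ 1 := (CFC.le_one_iff a).mp ha₁ x hx
  nlinarith

theorem hayashi_nagaoka {P T M : A} (hP₀ : 0 ≤ P) (hP₁ : P ≤ 1) (hT : 0 ≤ T)
    (hPS : P ≤ T * T) (hMT : M * T = 1) (hTM : T * M = 1) :
    1 - M * P * M ≤ 2 • (1 - P) + 4 • (T * T - P) := by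
  have hT_eq : CFC.sqrt (T * T) = T := (CFC.sqrt_eq_iff _ _ (hP₀.trans hPS) hT).mpr rfl
  have hPT : P ≤ T := (CFC.le_sqrt_self hP₀ hP₁).trans (hT_eq ▸ CFC.sqrt_le_sqrt P _ hPS)
  exact hayashi_nagaoka_of_le_root hMT hTM hP₀ hPT hPS

end CStarAlgebra

open scoped MatrixOrder

namespace Matrix

variable {n 𝕜 : Type*} [Fintype n] [DecidableEq n] [RCLike 𝕜]

theorem PosSemidef.sqrt_eq_cfc {A : Matrix n n 𝕜} (hA : A.PosSemidef) :
    hA.sqrt = cfc Real.sqrt A := by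
  rw [hA.1.cfc_eq]
  simp [PosSemidef.sqrt, IsHermitian.cfc, Function.comp_def]

theorem PosSemidef.sqrt_nonneg {A : Matrix n n 𝕜} (hA : A.PosSemidef) : 0 ≤ hA.sqrt :=
  hA.sqrt_eq_cfc ▸ cfc_nonneg fun x _ => Real.sqrt_nonneg x

theorem PosSemidef.sqrt_mul_self {A : Matrix n n 𝕜} (hA : A.PosSemidef) :
    hA.sqrt * hA.sqrt = A := by
  conv_rhs => rw [← cfc_id' ℝ A]
  rw [hA.sqrt_eq_cfc, ← cfc_mul ..]
  exact cfc_congr fun x hx => Real.mul_self_sqrt (spectrum_nonneg_of_nonneg hA.nonneg hx)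

theorem trace_mul_le_trace_mul_of_le {A B ρ : Matrix n n 𝕜} (hAB : A ≤ B) (hρ : 0 ≤ ρ) :
    (A * ρ).trace ≤ (B * ρ).trace := by
  rw [← sub_nonneg, ← trace_sub, ← sub_mul, ← CFC.sqrt_mul_sqrt_self ρ, ← mul_assoc,
    trace_mul_comm, ← mul_assoc]
  exact (nonneg_iff_posSemidef.mp <|
    (CFC.sqrt_nonneg ρ).isSelfAdjoint.conjugate_nonneg (sub_nonneg.mpr hAB)).trace_nonneg

end Matrix

open Matrix in
open scoped Matrix.Norms.L2Operator in
theorem srm_error_le {d : Type*} [Fintype d] [DecidableEq d] {P S ρ : Matrix d d ℂ}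
    (hP₀ : 0 ≤ P) (hP₁ : P ≤ 1) (hPS : P ≤ S) (hS : S.PosDef) (hρ : 0 ≤ ρ) (hρ₁ : ρ.trace = 1) :
    ((1 - (hS.posSemidef.sqrt)⁻¹ * P * (hS.posSemidef.sqrt)⁻¹) * ρ).trace.re ≤
      2 * (1 - (P * ρ).trace.re) + 4 * ((S * ρ).trace.re - (P * ρ).trace.re) := by
  set T := hS.posSemidef.sqrt
  have hTT : T * T = S := hS.posSemidef.sqrt_mul_self
  have hT : IsUnit T.det :=
    (isUnit_iff_isUnit_det T).mp (isUnit_of_mul_isUnit_left (hTT ▸ hS.isUnit))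
  have hHN := hayashi_nagaoka (A := Matrix d d ℂ) hP₀ hP₁ hS.posSemidef.sqrt_nonneg
    (hPS.trans_eq hTT.symm) (nonsing_inv_mul T hT) (mul_nonsing_inv T hT)
  rw [hTT] at hHN
  have htrace := (Complex.le_def.mp (trace_mul_le_trace_mul_of_le hHN hρ)).1
  simp only [add_mul, sub_mul, one_mul, smul_mul_assoc, trace_add, trace_sub, trace_smul, hρ₁,
    Complex.add_re, Complex.sub_re, Complex.re_nsmul, Complex.one_re] at htrace ⊢
  simp only [nsmul_eq_mul, Nat.cast_ofNat] at htrace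
  linarith

theorem Fintype.sum_sub_le_of_forall_ne_le {ι : Type*} [Fintype ι] (f : ι → ℝ) (i : ι) {c : ℝ}
    (h : ∀ j, j ≠ i → f j ≤ c) : ∑ j, f j - f i ≤ (Fintype.card ι - 1) * c := by
  classical
  rw [← Finset.sum_erase_eq_sub (Finset.mem_univ i)]
  calc ∑ j ∈ Finset.univ.erase i, f j ≤ ∑ _j ∈ Finset.univ.erase i, c :=
        Finset.sum_le_sum fun j hj => h j (Finset.ne_of_mem_erase hj)
    _ = (Fintype.card ι - 1) * c := by
        rw [Finset.sum_const, Finset.card_erase_of_mem (Finset.mem_univ i), Finset.card_univ,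
          nsmul_eq_mul, Nat.cast_sub (Fintype.card_pos_iff.mpr ⟨i⟩), Nat.cast_one]

theorem srm_packing_bound_general {L d : Type*} [Fintype L] [Nonempty L]
    [Fintype d] [DecidableEq d]
    (ρ : L → Matrix d d ℂ)
    (hρ : ∀ ℓ, (ρ ℓ).PosSemidef ∧ (ρ ℓ).trace = 1)
    (P : L → Matrix d d ℂ)
    (hP : ∀ ℓ, (P ℓ).PosSemidef ∧ ((1 : Matrix d d ℂ) - P ℓ).PosSemidef)
    (hS : (∑ ℓ, P ℓ).PosDef)
    (lam ν : ℝ)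
    (hdet : ∀ ℓ, 1 - lam ≤ ((P ℓ * ρ ℓ).trace).re)
    (hconf : ∀ ℓ ℓ', ℓ' ≠ ℓ → ((P ℓ' * ρ ℓ).trace).re ≤ ν) :
    (1 / (Fintype.card L : ℝ)) *
        ∑ ℓ, ((((1 : Matrix d d ℂ) -
          (hS.posSemidef.sqrt)⁻¹ * P ℓ * (hS.posSemidef.sqrt)⁻¹) * ρ ℓ).trace).re ≤
      2 * lam + 4 * ((Fintype.card L : ℝ) - 1) * ν := by
  have hPS : ∀ ℓ, P ℓ ≤ ∑ ℓ', P ℓ' := fun ℓ =>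
    Finset.single_le_sum (fun ℓ' _ => (hP ℓ').1.nonneg) (Finset.mem_univ ℓ)
  have herror : ∀ ℓ, ((((1 : Matrix d d ℂ) -
      (hS.posSemidef.sqrt)⁻¹ * P ℓ * (hS.posSemidef.sqrt)⁻¹) * ρ ℓ).trace).re ≤
        2 * lam + 4 * ((Fintype.card L : ℝ) - 1) * ν := by
    intro ℓ
    have hsrm := srm_error_le (hP ℓ).1.nonneg (hP ℓ).2 (hPS ℓ) hS (hρ ℓ).1.nonneg (hρ ℓ).2
    have hcross : ((∑ ℓ', P ℓ') * ρ ℓ).trace.re - (P ℓ * ρ ℓ).trace.re ≤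
        ((Fintype.card L : ℝ) - 1) * ν := by
      rw [Finset.sum_mul, Matrix.trace_sum, Complex.re_sum]
      exact Fintype.sum_sub_le_of_forall_ne_le _ ℓ (hconf ℓ)
    linarith [hdet ℓ]
  rw [one_div, inv_mul_le_iff₀ (by exact_mod_cast Fintype.card_pos)]
  calc _ ≤ ∑ _ℓ : L, (2 * lam + 4 * ((Fintype.card L : ℝ) - 1) * ν) :=
        Finset.sum_le_sum fun ℓ _ => herror ℓ
    _ = _ := by rw [Finset.sum_const, Finset.card_univ, nsmul_eq_mul]

/-- Packing-style average error bound for the square-root measurement: if each detector `P_ℓ`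
identifies its own state up to error `λ` and confuses other states with probability at most `ν`,
then the square-root measurement `Λ_ℓ = S^{−1/2} P_ℓ S^{−1/2}` has average probability of error
at most `2λ + 4(|L| − 1)ν`. -/
theorem srm_packing_bound {L d : Type*} [Fintype L] [Nonempty L] [DecidableEq L]
    [Fintype d] [DecidableEq d]
    (ρ : L → Matrix d d ℂ)
    (hρ : ∀ ℓ, (ρ ℓ).PosSemidef ∧ (ρ ℓ).trace = 1)
    (P : L → Matrix d d ℂ)
    (hP : ∀ ℓ, (P ℓ).PosSemidef ∧ ((1 : Matrix d d ℂ) - P ℓ).PosSemidef)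
    (hS : (∑ ℓ, P ℓ).PosDef)
    (lam ν : ℝ) (hlam : 0 ≤ lam) (hν : 0 ≤ ν)
    (hdet : ∀ ℓ, 1 - lam ≤ ((P ℓ * ρ ℓ).trace).re)
    (hconf : ∀ ℓ ℓ', ℓ' ≠ ℓ → ((P ℓ' * ρ ℓ).trace).re ≤ ν) :
    (1 / (Fintype.card L : ℝ)) *
        ∑ ℓ, ((((1 : Matrix d d ℂ) -
          (hS.posSemidef.sqrt)⁻¹ * P ℓ * (hS.posSemidef.sqrt)⁻¹) * ρ ℓ).trace).re ≤
      2 * lam + 4 * ((Fintype.card L : ℝ) - 1) * ν :=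
  srm_packing_bound_general ρ hρ P hP hS lam ν hdet hconf
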